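/- arXiv:2508.16787 — 5 statements merged into one kernel-verified Lean document; each statement's English description precedes it below -/
import Mathlib

section
/- Let C be a braided monoidal category and B a bimonoid in C. Then B admits an antipode (i.e., the bimonoid B underlies a Hopf monoid in C) if and only if its shear morphism sh_B := (id_B ⊗ m) ∘ α_{B,B,B} ∘ (Δ ⊗ id_B) : B ⊗ B → B ⊗ B is an isomorphism. -/
/-!
For a comonoid `X`, `shearBy f := (Δ ▷ X) ≫ α ≫ (X ◁ f)`, in Sweedler notation
`x ⊗ y ↦ x₁ ⊗ f (x₂ ⊗ y)`, is a left `X`-comodule endomorphism of `X ⊗ X`, and coassociativity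
gives `shearBy f ≫ shearBy g = shearBy (shearBy f ≫ g)`, with `shearBy (ε ▷ X ≫ λ) = 𝟙`.
The shear is `shearBy μ`. If `S` is an antipode, `shearBy ((S ▷ X) ≫ μ)`, i.e.
`x ⊗ y ↦ x₁ ⊗ S(x₂) y`, inverts it. Conversely, the inverse of the shear is again a left comodule
map and, like the shear, a right `X`-module map; so `S x := (ε ⊗ 1) (shear⁻¹ (x ⊗ 1))` satisfies
`S(x₁) y = (ε ⊗ 1) (shear⁻¹ (x ⊗ y))` and `x₁ ⊗ S(x₂) = shear⁻¹ (x ⊗ 1)`, which yield the two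
antipode equations.
-/

open CategoryTheory MonoidalCategory

universe v u

variable {C : Type u} [Category.{v} C] [MonoidalCategory C] [BraidedCategory C]

/-- The shear morphism `(id_B ⊗ m) ∘ α ∘ (Δ ⊗ id_B) : B ⊗ B ⟶ B ⊗ B` of a bimonoid `B`. -/
noncomputable def Bimon_.shear (B : Bimon C) : B.X.X ⊗ B.X.X ⟶ B.X.X ⊗ B.X.X :=
  ((ComonObj.comul (self := B.comon)).hom ▷ B.X.X) ≫ (α_ B.X.X B.X.X B.X.X).hom ≫ (B.X.X ◁ MonObj.mul (X := B.X.X))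

open scoped CategoryTheory.MonObj CategoryTheory.ComonObj

namespace CategoryTheory

variable {V : Type*} [Category V] [MonoidalCategory V]

section Mon

variable {X : V} [MonObj X]

variable (X) in
noncomputable def unitRight : X ⟶ X ⊗ X := (ρ_ X).inv ≫ X ◁ η

theorem unitRight_comp_mul : unitRight X ≫ μ = 𝟙 X := by
  simp [unitRight]

theorem unitRight_whiskerRight_comp_whiskerLeft_mul :
    unitRight X ▷ X ≫ (α_ X X X).hom ≫ X ◁ μ = 𝟙 (X ⊗ X) := by
  simp only [unitRight, comp_whiskerRight, Category.assoc]
  slice_lhs 2 3 => rw [associator_naturality_middle]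
  slice_lhs 3 4 => rw [← MonoidalCategory.whiskerLeft_comp, MonObj.one_mul]
  rw [triangle, ← comp_whiskerRight, Iso.inv_hom_id, id_whiskerRight]

end Mon

section Comon

variable {X : V} [ComonObj X]

noncomputable def shearBy (f : X ⊗ X ⟶ X) : X ⊗ X ⟶ X ⊗ X :=
  Δ ▷ X ≫ (α_ X X X).hom ≫ X ◁ f

variable (X) in
noncomputable def counitLeft : X ⊗ X ⟶ X := ε ▷ X ≫ (λ_ X).hom

theorem shearBy_comul (f : X ⊗ X ⟶ X) :
    shearBy f ≫ Δ ▷ X ≫ (α_ X X X).hom = Δ ▷ X ≫ (α_ X X X).hom ≫ X ◁ shearBy f := by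
  simp only [shearBy, Category.assoc]
  slice_lhs 3 4 => rw [whisker_exchange]
  slice_lhs 4 5 => rw [associator_naturality_right]
  slice_lhs 2 3 => rw [← associator_naturality_left]
  slice_lhs 3 4 => rw [← pentagon]
  slice_lhs 1 3 =>
    rw [← comp_whiskerRight, ← comp_whiskerRight, ComonObj.comul_assoc_flip_assoc,
      Iso.inv_hom_id, Category.comp_id, comp_whiskerRight]
  slice_lhs 2 3 => rw [associator_naturality_middle]
  simp only [MonoidalCategory.whiskerLeft_comp, Category.assoc]

theorem shearBy_comp_shearBy (f g : X ⊗ X ⟶ X) :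
    shearBy f ≫ shearBy g = shearBy (shearBy f ≫ g) := by
  nth_rw 2 [shearBy]
  rw [reassoc_of% shearBy_comul, ← MonoidalCategory.whiskerLeft_comp]
  rfl

theorem shearBy_counitLeft : shearBy (counitLeft X) = 𝟙 (X ⊗ X) := by
  simp only [shearBy, counitLeft, MonoidalCategory.whiskerLeft_comp]
  slice_lhs 2 3 => rw [← associator_naturality_middle]
  slice_lhs 3 4 => rw [triangle]
  slice_lhs 1 3 => rw [← comp_whiskerRight, ← comp_whiskerRight, ComonObj.comul_counit_assoc,
      Iso.inv_hom_id]
  simp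

theorem shearBy_comp_counitLeft (f : X ⊗ X ⟶ X) : shearBy f ≫ counitLeft X = f := by
  simp only [shearBy, counitLeft, Category.assoc]
  slice_lhs 3 4 => rw [whisker_exchange]
  slice_lhs 4 5 => rw [leftUnitor_naturality]
  slice_lhs 2 3 => rw [← associator_naturality_left]
  slice_lhs 3 4 => rw [leftUnitor_tensor_hom, Iso.hom_inv_id_assoc]
  slice_lhs 1 3 => rw [← comp_whiskerRight, ← comp_whiskerRight, ComonObj.counit_comul_assoc,
      Iso.inv_hom_id]
  simp

theorem inv_shearBy_comul {f : X ⊗ X ⟶ X} [IsIso (shearBy f)] :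
    inv (shearBy f) ≫ Δ ▷ X ≫ (α_ X X X).hom = Δ ▷ X ≫ (α_ X X X).hom ≫ X ◁ inv (shearBy f) := by
  rw [IsIso.inv_comp_eq, reassoc_of% shearBy_comul, ← MonoidalCategory.whiskerLeft_comp,
    IsIso.hom_inv_id, MonoidalCategory.whiskerLeft_id, Category.comp_id]

end Comon

section MonComon

variable {X : V} [MonObj X] [ComonObj X]

theorem shearBy_mul_comp_whiskerRight_mul {S : X ⟶ X} (hS : Δ ≫ S ▷ X ≫ μ = ε ≫ η) :
    shearBy μ ≫ S ▷ X ≫ μ = counitLeft X := by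
  simp only [shearBy, counitLeft, Category.assoc]
  slice_lhs 3 4 => rw [whisker_exchange]
  slice_lhs 4 5 => rw [MonObj.mul_assoc_flip]
  slice_lhs 3 4 => rw [associator_inv_naturality_left]
  slice_lhs 2 3 => rw [Iso.hom_inv_id]
  rw [Category.id_comp]
  slice_lhs 1 3 => rw [← comp_whiskerRight, ← comp_whiskerRight, hS]
  rw [comp_whiskerRight, Category.assoc, MonObj.one_mul]

theorem shearBy_whiskerRight_mul_comp_mul {S : X ⟶ X}
    (hS : Δ ≫ X ◁ S ≫ μ = ε ≫ η) : shearBy (S ▷ X ≫ μ) ≫ μ = counitLeft X := by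
  simp only [shearBy, counitLeft, MonoidalCategory.whiskerLeft_comp, Category.assoc]
  slice_lhs 4 5 => rw [MonObj.mul_assoc_flip]
  slice_lhs 3 4 => rw [associator_inv_naturality_middle]
  slice_lhs 2 3 => rw [Iso.hom_inv_id]
  rw [Category.id_comp]
  slice_lhs 1 3 => rw [← comp_whiskerRight, ← comp_whiskerRight, hS]
  rw [comp_whiskerRight, Category.assoc, MonObj.one_mul]

theorem isIso_shearBy_mul_of_antipode {S : X ⟶ X} (hleft : Δ ≫ S ▷ X ≫ μ = ε ≫ η)
    (hright : Δ ≫ X ◁ S ≫ μ = ε ≫ η) : IsIso (shearBy (μ : X ⊗ X ⟶ X)) :=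
  ⟨shearBy (S ▷ X ≫ μ),
    by rw [shearBy_comp_shearBy, shearBy_mul_comp_whiskerRight_mul hleft, shearBy_counitLeft],
    by rw [shearBy_comp_shearBy, shearBy_whiskerRight_mul_comp_mul hright,
      shearBy_counitLeft]⟩

theorem unitRight_comp_comul_whiskerRight :
    unitRight X ≫ Δ ▷ X ≫ (α_ X X X).hom = Δ ≫ X ◁ unitRight X := by
  simp only [unitRight, MonoidalCategory.whiskerLeft_comp, Category.assoc]
  slice_lhs 2 3 => rw [whisker_exchange]
  slice_lhs 1 2 => rw [← rightUnitor_inv_naturality]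
  slice_lhs 3 4 => rw [associator_naturality_right]
  slice_lhs 2 3 => rw [rightUnitor_tensor_inv, Category.assoc, Iso.inv_hom_id, Category.comp_id]

theorem unitRight_comp_shearBy_mul : unitRight X ≫ shearBy μ = Δ := by
  rw [shearBy, reassoc_of% unitRight_comp_comul_whiskerRight, ← MonoidalCategory.whiskerLeft_comp,
    unitRight_comp_mul, MonoidalCategory.whiskerLeft_id, Category.comp_id]

theorem unitRight_comp_counitLeft : unitRight X ≫ counitLeft X = ε ≫ η := by
  simp only [unitRight, counitLeft, Category.assoc]
  slice_lhs 2 3 => rw [whisker_exchange]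
  slice_lhs 1 2 => rw [← rightUnitor_inv_naturality]
  slice_lhs 3 4 => rw [leftUnitor_naturality]
  rw [unitors_equal]
  simp

theorem counitLeft_whiskerRight_comp_mul :
    counitLeft X ▷ X ≫ μ = (α_ X X X).hom ≫ X ◁ μ ≫ counitLeft X := by
  simp only [counitLeft, comp_whiskerRight, Category.assoc]
  slice_rhs 2 3 => rw [whisker_exchange]
  slice_rhs 3 4 => rw [leftUnitor_naturality]
  slice_rhs 1 2 => rw [← associator_naturality_left]
  slice_rhs 2 3 => rw [leftUnitor_tensor_hom, Iso.hom_inv_id_assoc]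

theorem shearBy_whiskerRight_comp_whiskerLeft_mul {f : X ⊗ X ⟶ X}
    (hf : f ▷ X ≫ μ = (α_ X X X).hom ≫ X ◁ μ ≫ f) :
    shearBy f ▷ X ≫ (α_ X X X).hom ≫ X ◁ μ = (α_ X X X).hom ≫ X ◁ μ ≫ shearBy f := by
  simp only [shearBy, comp_whiskerRight, Category.assoc]
  slice_lhs 3 4 => rw [associator_naturality_middle]
  slice_lhs 4 5 => rw [← MonoidalCategory.whiskerLeft_comp, hf]
  slice_rhs 2 3 => rw [whisker_exchange]
  slice_rhs 3 4 => rw [associator_naturality_right]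
  slice_rhs 1 2 => rw [← associator_naturality_left]
  slice_rhs 2 3 => rw [← pentagon]
  simp only [MonoidalCategory.whiskerLeft_comp, Category.assoc]

theorem inv_shearBy_mul_whiskerRight_comp_whiskerLeft_mul [IsIso (shearBy (μ : X ⊗ X ⟶ X))] :
    inv (shearBy μ) ▷ X ≫ (α_ X X X).hom ≫ X ◁ μ =
      (α_ X X X).hom ≫ X ◁ μ ≫ inv (shearBy μ) := by
  rw [← inv_whiskerRight, IsIso.inv_comp_eq,
    reassoc_of% shearBy_whiskerRight_comp_whiskerLeft_mul (MonObj.mul_assoc X), IsIso.hom_inv_id,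
    Category.comp_id]

theorem inv_shearBy_mul_comp_mul [IsIso (shearBy (μ : X ⊗ X ⟶ X))] :
    inv (shearBy μ) ≫ μ = counitLeft X := by
  rw [IsIso.inv_comp_eq, shearBy_comp_counitLeft]

section Antipode

variable (X) [IsIso (shearBy (μ : X ⊗ X ⟶ X))]

noncomputable def antipodeOfShear : X ⟶ X := unitRight X ≫ inv (shearBy μ) ≫ counitLeft X

theorem antipodeOfShear_whiskerRight_mul :
    antipodeOfShear X ▷ X ≫ μ = inv (shearBy μ) ≫ counitLeft X := by
  rw [antipodeOfShear, comp_whiskerRight, comp_whiskerRight, Category.assoc, Category.assoc,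
    counitLeft_whiskerRight_comp_mul, reassoc_of% inv_shearBy_mul_whiskerRight_comp_whiskerLeft_mul,
    reassoc_of% unitRight_whiskerRight_comp_whiskerLeft_mul]

theorem comul_whiskerLeft_antipodeOfShear :
    Δ ≫ X ◁ antipodeOfShear X = unitRight X ≫ inv (shearBy μ) := by
  rw [antipodeOfShear, MonoidalCategory.whiskerLeft_comp, MonoidalCategory.whiskerLeft_comp,
    ← reassoc_of% unitRight_comp_comul_whiskerRight, ← reassoc_of% inv_shearBy_comul]
  change unitRight X ≫ inv (shearBy μ) ≫ shearBy (counitLeft X) = _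
  rw [shearBy_counitLeft, Category.comp_id]

theorem antipodeOfShear_left : Δ ≫ antipodeOfShear X ▷ X ≫ μ = ε ≫ η := by
  rw [antipodeOfShear_whiskerRight_mul, ← unitRight_comp_shearBy_mul, Category.assoc,
    IsIso.hom_inv_id_assoc, unitRight_comp_counitLeft]

theorem antipodeOfShear_right : Δ ≫ X ◁ antipodeOfShear X ≫ μ = ε ≫ η := by
  rw [reassoc_of% comul_whiskerLeft_antipodeOfShear, inv_shearBy_mul_comp_mul,
    unitRight_comp_counitLeft]

end Antipode

theorem exists_antipode_iff_isIso_shearBy_mul :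
    (∃ S : X ⟶ X, Δ ≫ S ▷ X ≫ μ = ε ≫ η ∧ Δ ≫ X ◁ S ≫ μ = ε ≫ η) ↔
      IsIso (shearBy (μ : X ⊗ X ⟶ X)) :=
  ⟨fun ⟨_, hleft, hright⟩ ↦ isIso_shearBy_mul_of_antipode hleft hright,
    fun _ ↦ ⟨antipodeOfShear X, antipodeOfShear_left X, antipodeOfShear_right X⟩⟩

end MonComon

end CategoryTheory

/-- A bimonoid `B` in a braided monoidal category admits an antipode (i.e. underlies a Hopf
monoid) if and only if its shear morphism is an isomorphism. -/
theorem Bimon_.exists_antipode_iff_isIso_shear (B : Bimon C) :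
    (∃ S : B.X.X ⟶ B.X.X,
        (ComonObj.comul (self := B.comon)).hom ≫ (S ▷ B.X.X) ≫ MonObj.mul (X := B.X.X) = (ComonObj.counit (self := B.comon)).hom ≫ MonObj.one (X := B.X.X) ∧
        (ComonObj.comul (self := B.comon)).hom ≫ (B.X.X ◁ S) ≫ MonObj.mul (X := B.X.X) = (ComonObj.counit (self := B.comon)).hom ≫ MonObj.one (X := B.X.X)) ↔
      IsIso (Bimon_.shear B) :=
  exists_antipode_iff_isIso_shearBy_mul
end

section
/- Let H be a Hopf monoid in a braided monoidal category C, with antipode S. Then the coshear morphism sh^co_H = (m ⊗ id_H) ∘ α⁻¹ ∘ (id_H ⊗ β_{H,H}) ∘ α ∘ (Δ ⊗ id_H) : H ⊗ H → H ⊗ H is an isomorphism if and only if the antipode S : H → H is an isomorphism. -/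
open CategoryTheory MonoidalCategory

universe v u

variable {C : Type u} [Category.{v} C] [MonoidalCategory C] [BraidedCategory C]

/-- The coshear morphism `(m ⊗ id_B) ∘ α⁻¹ ∘ (id_B ⊗ β_{B,B}) ∘ α ∘ (Δ ⊗ id_B)` of a
bimonoid `B`. -/
noncomputable def Bimon_.coshear (B : Bimon C) : B.X.X ⊗ B.X.X ⟶ B.X.X ⊗ B.X.X :=
  ((Comon.comon (self := (B : Comon (Mon C)))).comul.hom ▷ B.X.X) ≫ (α_ B.X.X B.X.X B.X.X).hom ≫ (B.X.X ◁ (β_ B.X.X B.X.X).hom) ≫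
    (α_ B.X.X B.X.X B.X.X).inv ≫ (MonObj.mul (X := B.X.X) ▷ B.X.X)

/-!
Write `sh(a ⊗ b) = a₁ b ⊗ a₂` for the coshear, the braiding being implicit.

`sh` is the braiding followed by the shear `a ⊗ b ↦ b₁ a ⊗ b₂` of the reversed monoid, whose
strands cross by `β⁻¹`. If `S` is invertible then, `S` being an anti-comonoid morphism, `S⁻¹` is
a two-sided convolution inverse of the identity for the reversed multiplication, and a shear by a
convolution-invertible map is inverted by the shear by its convolution inverse.

Conversely, `sh(S x₁ ⊗ x₂) = 1 ⊗ S x` and `S(x₁ y) x₂ = S y · S x₁ · x₂ = ε(x) S y` exhibit `S` as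
a retract of `sh` in the arrow category, and a retract of an isomorphism is an isomorphism.
-/

open BraidedCategory
open scoped MonObj ComonObj HopfObj

namespace CategoryTheory

section Shear

variable {C : Type u} [Category.{v} C] [MonoidalCategory C]
  {M N : C} [ComonObj M] [mon : MonObj N]

/-- `a ⊗ b ↦ a φ(b₁) ⊗ b₂` -/
noncomputable def shear (φ : M ⟶ N) : N ⊗ M ⟶ N ⊗ M :=
  N ◁ (Δ[M] ≫ φ ▷ M) ≫ (α_ N N M).inv ≫ μ[N] ▷ M

theorem shear_counit_unit : shear (ε[M] ≫ η[N]) = 𝟙 (N ⊗ M) := by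
  simp only [shear, comp_whiskerRight, MonoidalCategory.whiskerLeft_comp, Category.assoc]
  rw [associator_inv_naturality_middle_assoc, ← comp_whiskerRight, MonObj.mul_one,
    ← MonoidalCategory.whiskerLeft_comp_assoc, ComonObj.counit_comul]
  monoidal

theorem shear_comp_shear (φ ψ : M ⟶ N) :
    shear φ ≫ shear ψ = shear (Δ[M] ≫ φ ▷ M ≫ N ◁ ψ ≫ μ[N]) := by
  simp only [shear, comp_whiskerRight, MonoidalCategory.whiskerLeft_comp, Category.assoc]
  rw [← whisker_exchange_assoc, ← whisker_exchange_assoc, associator_inv_naturality_left_assoc,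
    ← comp_whiskerRight, MonObj.mul_assoc, ← associator_inv_naturality_right_assoc,
    ← associator_inv_naturality_right_assoc,
    ← MonoidalCategory.whiskerLeft_comp_assoc (f := φ ▷ M), ← whisker_exchange,
    MonoidalCategory.whiskerLeft_comp_assoc,
    ← MonoidalCategory.whiskerLeft_comp_assoc (f := Δ[M]), ComonObj.comul_assoc]
  monoidal

theorem isIso_shear {φ ψ : M ⟶ N} (h₁ : Δ[M] ≫ φ ▷ M ≫ N ◁ ψ ≫ μ[N] = ε[M] ≫ η[N])
    (h₂ : Δ[M] ≫ ψ ▷ M ≫ N ◁ φ ≫ μ[N] = ε[M] ≫ η[N]) : IsIso (shear φ) :=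
  ⟨shear ψ, by rw [shear_comp_shear, h₁, shear_counit_unit],
    by rw [shear_comp_shear, h₂, shear_counit_unit]⟩

end Shear

theorem BraidedCategory.yang_baxter_inv (X Y Z : C) :
    (α_ X Y Z).inv ≫ (β_ Y X).inv ▷ Z ≫ (α_ Y X Z).hom ≫ Y ◁ (β_ Z X).inv ≫
      (α_ Y Z X).inv ≫ (β_ Z Y).inv ▷ X ≫ (α_ Z Y X).hom =
    X ◁ (β_ Z Y).inv ≫ (α_ X Z Y).inv ≫ (β_ Z X).inv ▷ Y ≫ (α_ Z X Y).hom ≫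
      Z ◁ (β_ Y X).inv :=
  @yang_baxter C _ _ (reverseBraiding C) X Y Z

/-- `a ⊗ b ↦ b a`, crossing by `β⁻¹`: an antipode is anti-comultiplicative for `β`, so its inverse
is an antipode for this multiplication. -/
noncomputable abbrev MonObj.rev (M : C) [MonObj M] : MonObj M where
  one := η[M]
  mul := (β_ M M).inv ≫ μ[M]
  mul_assoc := by
    rw [← cancel_epi (α_ M M M).inv]
    simpa using yang_baxter_inv M M M =≫ (M ◁ μ[M] ≫ μ[M])

theorem MonObj.rev_mul (M : C) [MonObj M] :
    MonObj.mul (self := MonObj.rev M) = (β_ M M).inv ≫ μ[M] :=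
  rfl

/-- `Bimon_.coshear` on the underlying object; the two agree definitionally. -/
noncomputable def BimonObj.coshear (M : C) [BimonObj M] : M ⊗ M ⟶ M ⊗ M :=
  Δ[M] ▷ M ≫ (α_ M M M).hom ≫ M ◁ (β_ M M).hom ≫ (α_ M M M).inv ≫ μ[M] ▷ M

theorem BimonObj.coshear_eq_braiding_comp_shear (M : C) [BimonObj M] :
    coshear M = (β_ M M).hom ≫ shear (mon := MonObj.rev M) (𝟙 M) := by
  dsimp only [coshear, shear]
  rw [MonObj.rev_mul, MonoidalCategory.id_whiskerRight, Category.comp_id,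
    ← braiding_naturality_left_assoc, braiding_tensor_left_hom]
  simp

namespace HopfObj

variable (M : C) [HopfObj M]

theorem inv_antipode_comul [IsIso 𝒮[M]] :
    inv 𝒮[M] ≫ Δ[M] = Δ[M] ≫ (inv 𝒮[M] ⊗ₘ inv 𝒮[M]) ≫ (β_ M M).inv := by
  rw [← cancel_epi 𝒮[M], IsIso.hom_inv_id_assoc, reassoc_of% antipode_comul M,
    tensorHom_comp_tensorHom_assoc, IsIso.hom_inv_id, id_tensorHom_id, Category.id_comp,
    Iso.hom_inv_id, Category.comp_id]

theorem inv_antipode_counit [IsIso 𝒮[M]] : inv 𝒮[M] ≫ ε[M] = ε[M] := by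
  rw [← cancel_epi 𝒮[M], IsIso.hom_inv_id_assoc, antipode_counit]

theorem inv_antipode_left [IsIso 𝒮[M]] :
    Δ[M] ≫ inv 𝒮[M] ▷ M ≫ (β_ M M).inv ≫ μ[M] = ε[M] ≫ η[M] := calc
  _ = inv 𝒮[M] ≫ Δ[M] ≫ 𝒮[M] ▷ M ≫ μ[M] := by
    rw [reassoc_of% inv_antipode_comul M, ← braiding_inv_naturality_right_assoc,
      tensorHom_def_assoc, ← MonoidalCategory.whiskerLeft_comp_assoc, IsIso.inv_hom_id,
      MonoidalCategory.whiskerLeft_id, Category.id_comp]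
  _ = ε[M] ≫ η[M] := by rw [antipode_left, reassoc_of% inv_antipode_counit M]

theorem inv_antipode_right [IsIso 𝒮[M]] :
    Δ[M] ≫ M ◁ inv 𝒮[M] ≫ (β_ M M).inv ≫ μ[M] = ε[M] ≫ η[M] := calc
  _ = inv 𝒮[M] ≫ Δ[M] ≫ M ◁ 𝒮[M] ≫ μ[M] := by
    rw [reassoc_of% inv_antipode_comul M, ← braiding_inv_naturality_left_assoc,
      tensorHom_def'_assoc, ← comp_whiskerRight_assoc, IsIso.inv_hom_id,
      MonoidalCategory.id_whiskerRight, Category.id_comp]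
  _ = ε[M] ≫ η[M] := by rw [antipode_right, reassoc_of% inv_antipode_counit M]

theorem isIso_coshear_of_isIso_antipode [IsIso 𝒮[M]] : IsIso (BimonObj.coshear M) := by
  have : IsIso (shear (mon := MonObj.rev M) (𝟙 M)) :=
    isIso_shear (mon := MonObj.rev M) (ψ := inv 𝒮[M])
      (by rw [MonoidalCategory.id_whiskerRight, Category.id_comp]; exact inv_antipode_right M)
      (by rw [MonoidalCategory.whiskerLeft_id, Category.id_comp]; exact inv_antipode_left M)
  rw [BimonObj.coshear_eq_braiding_comp_shear]
  infer_instance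

theorem comul_antipode_coshear :
    Δ[M] ≫ 𝒮[M] ▷ M ≫ BimonObj.coshear M = 𝒮[M] ≫ (λ_ M).inv ≫ η[M] ▷ M := calc
  _ = Δ[M] ≫ (β_ M M).hom ≫ (Δ[M] ≫ 𝒮[M] ▷ M ≫ μ[M]) ▷ M ≫ M ◁ 𝒮[M] := by
    -- `S` is anti-comultiplicative; after moving the copies of `S` past the crossings,
    -- coassociativity and the hexagon identity gather the crossings into `β_{M, M ⊗ M}`.
    dsimp only [BimonObj.coshear]
    slice_lhs 2 3 => rw [← comp_whiskerRight, antipode_comul]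
    simp only [comp_whiskerRight, Category.assoc]
    slice_lhs 4 4 => rw [MonoidalCategory.tensorHom_def, comp_whiskerRight]
    slice_lhs 5 6 => rw [associator_naturality_middle]
    slice_lhs 6 7 => rw [← MonoidalCategory.whiskerLeft_comp, braiding_naturality_left,
      MonoidalCategory.whiskerLeft_comp]
    slice_lhs 7 8 => rw [associator_inv_naturality_right]
    slice_lhs 8 9 => rw [whisker_exchange]
    slice_lhs 4 5 => rw [associator_naturality_left]
    slice_lhs 5 6 => rw [← whisker_exchange]
    slice_lhs 6 7 => rw [associator_inv_naturality_left]
    rw [ComonObj.comul_assoc_flip_assoc]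
    slice_lhs 3 7 => rw [← braiding_tensor_right_hom]
    simp only [Category.assoc]
    rw [braiding_naturality_right_assoc]
  _ = _ := by
    rw [antipode_left, comp_whiskerRight_assoc, ← braiding_naturality_right_assoc,
      ComonObj.comul_counit_assoc, rightUnitor_inv_braiding_assoc, ← whisker_exchange,
      leftUnitor_inv_naturality_assoc]

theorem coshear_antipode_mul :
    BimonObj.coshear M ≫ 𝒮[M] ▷ M ≫ μ[M] = ε[M] ▷ M ≫ (λ_ M).hom ≫ 𝒮[M] := calc
  _ = M ◁ 𝒮[M] ≫ (β_ M M).hom ≫ M ◁ (Δ[M] ≫ 𝒮[M] ▷ M ≫ μ[M]) ≫ μ[M] := by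
    -- `S` is anti-multiplicative; after moving the copies of `S` past the crossings,
    -- associativity and the hexagon identity gather the crossings into `β_{M ⊗ M, M}`.
    dsimp only [BimonObj.coshear]
    simp only [Category.assoc]
    slice_lhs 5 6 => rw [← comp_whiskerRight, mul_antipode]
    simp only [comp_whiskerRight, Category.assoc]
    slice_lhs 5 5 => rw [MonoidalCategory.tensorHom_def, comp_whiskerRight]
    slice_lhs 4 5 => rw [← associator_inv_naturality_left]
    slice_lhs 3 4 => rw [whisker_exchange]
    slice_lhs 2 3 => rw [← associator_naturality_left]
    slice_lhs 1 2 => rw [← comp_whiskerRight]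
    slice_lhs 4 5 => rw [← associator_inv_naturality_middle]
    slice_lhs 3 4 => rw [← MonoidalCategory.whiskerLeft_comp, ← braiding_naturality_right,
      MonoidalCategory.whiskerLeft_comp]
    slice_lhs 2 3 => rw [← associator_naturality_right]
    slice_lhs 1 2 => rw [← whisker_exchange]
    slice_lhs 7 8 => rw [MonObj.mul_assoc M]
    slice_lhs 3 7 => rw [← braiding_tensor_left_hom]
    slice_lhs 2 3 => rw [braiding_naturality_left]
    simp only [MonoidalCategory.whiskerLeft_comp, Category.assoc]
  _ = _ := by
    rw [antipode_left, MonoidalCategory.whiskerLeft_comp_assoc, MonObj.mul_one,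
      ← braiding_naturality_left_assoc, braiding_rightUnitor, whisker_exchange_assoc,
      leftUnitor_naturality]

noncomputable def retractArrowCoshear : RetractArrow 𝒮[M] (BimonObj.coshear M) where
  i := Arrow.homMk' (Δ[M] ≫ 𝒮[M] ▷ M) ((λ_ M).inv ≫ η[M] ▷ M)
    (by simpa using comul_antipode_coshear M)
  r := Arrow.homMk' (ε[M] ▷ M ≫ (λ_ M).hom) (𝒮[M] ▷ M ≫ μ[M])
    (by simpa using (coshear_antipode_mul M).symm)
  retract := by ext <;> simp [← comp_whiskerRight_assoc]

theorem isIso_coshear_iff_isIso_antipode : IsIso (BimonObj.coshear M) ↔ IsIso 𝒮[M] :=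
  ⟨(MorphismProperty.isomorphisms C).of_retract (retractArrowCoshear M),
    fun _ ↦ isIso_coshear_of_isIso_antipode M⟩

end HopfObj

end CategoryTheory

/-- For a Hopf monoid `H` in a braided monoidal category with antipode `S`, the coshear
morphism is an isomorphism if and only if the antipode is an isomorphism. -/
theorem Hopf_.isIso_coshear_iff_isIso_antipode (H : Hopf C) :
    IsIso (Bimon_.coshear H.toBimon) ↔ IsIso (HopfObj.antipode (X := H.X)) :=
  HopfObj.isIso_coshear_iff_isIso_antipode H.X
end

section
/- Let R be a commutative ring and A a bialgebra over R. Then A admits an antipode (equivalently, A can be equipped with the structure of a Hopf algebra over R) if and only if the shear map sh_A : A ⊗[R] A → A ⊗[R] A, determined by sh_A(a ⊗ b) = Σ a₍₁₎ ⊗ a₍₂₎·b, is bijective. -/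
open TensorProduct

variable (R A : Type*) [CommRing R] [Ring A] [Bialgebra R A]

/-- The shear map of a bialgebra `A` over `R`: the `R`-linear endomorphism of `A ⊗[R] A`
determined by `a ⊗ b ↦ Σ a₍₁₎ ⊗ a₍₂₎·b`, i.e. the composite
`(id_A ⊗ mul) ∘ assoc ∘ (comul ⊗ id_A)`. -/
noncomputable def shearMap : A ⊗[R] A →ₗ[R] A ⊗[R] A :=
  (LinearMap.mul' R A).lTensor A ∘ₗ (TensorProduct.assoc R A A A).toLinearMap ∘ₗ
    (Coalgebra.comul (R := R) (A := A)).rTensor A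

/-!
For a linear map `f : A → A` let `F f : a ⊗ b ↦ Σ a₍₁₎ ⊗ f(a₍₂₎)·b`, so that the shear map is
`F id`. By coassociativity `F` turns convolution into composition, and `f` is recovered from
`F f` as `a ↦ (ε ⊗ id)(F f (a ⊗ 1))`. The image of `F` is exactly the set of right `A`-linear,
left `A`-colinear endomorphisms of `A ⊗ A` (`A` coacting on the first factor through `Δ`), and
this set is closed under taking inverses. Hence `F f` is invertible iff `f` is
convolution-invertible; for `f = id` this says that the shear map is bijective iff `A` has an
antipode.
-/

open Coalgebra LinearMap WithConv

section ShearMapOf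

variable {R A : Type*} [CommSemiring R] [Semiring A] [Algebra R A] [Coalgebra R A]

variable (R A) in
noncomputable def leftCoaction : A ⊗[R] A →ₗ[R] A ⊗[R] (A ⊗[R] A) :=
  (TensorProduct.assoc R A A A).toLinearMap ∘ₗ comul.rTensor A

variable (R A) in
noncomputable def counitLeft : A ⊗[R] A →ₗ[R] A :=
  (TensorProduct.lid R A).toLinearMap ∘ₗ counit.rTensor A

/-- `a ⊗ b ↦ Σ a₍₁₎ ⊗ f(a₍₂₎)·b`, so that `shearMapOf id` is the shear map. -/
noncomputable def shearMapOf (f : A →ₗ[R] A) : Module.End R (A ⊗[R] A) :=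
  (mul' R A ∘ₗ f.rTensor A).lTensor A ∘ₗ leftCoaction R A

noncomputable def ofShearMap (G : Module.End R (A ⊗[R] A)) : A →ₗ[R] A :=
  counitLeft R A ∘ₗ G ∘ₗ (Algebra.TensorProduct.includeLeft (S := R)).toLinearMap

/-- These are exactly the endomorphisms of the form `shearMapOf f`, see
`IsRightLinearLeftColinear.shearMapOf_ofShearMap`. -/
structure IsRightLinearLeftColinear (G : Module.End R (A ⊗[R] A)) : Prop where
  commute_lTensor_mulRight (b : A) : Commute G ((mulRight R b).lTensor A)
  leftCoaction_comp : leftCoaction R A ∘ₗ G = G.lTensor A ∘ₗ leftCoaction R A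

@[simp] lemma counitLeft_tmul (a b : A) : counitLeft R A (a ⊗ₜ b) = counit (R := R) a • b := by
  simp [counitLeft]

lemma leftCoaction_tmul {ι : Type*} {a : A} (𝓡 : Repr R a ι) (b : A) :
    leftCoaction R A (a ⊗ₜ b) = ∑ i ∈ 𝓡.index, 𝓡.left i ⊗ₜ (𝓡.right i ⊗ₜ b) := by
  simp [leftCoaction, ← 𝓡.eq, sum_tmul]

lemma shearMapOf_tmul (f : A →ₗ[R] A) {ι : Type*} {a : A} (𝓡 : Repr R a ι) (b : A) :
    shearMapOf f (a ⊗ₜ b) = ∑ i ∈ 𝓡.index, 𝓡.left i ⊗ₜ (f (𝓡.right i) * b) := by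
  simp [shearMapOf, leftCoaction_tmul 𝓡]

lemma lTensor_counitLeft_comp_leftCoaction :
    (counitLeft R A).lTensor A ∘ₗ leftCoaction R A = LinearMap.id := by
  ext a b
  have h := congr((toSpanSingleton R A b).lTensor A $(sum_tmul_counit_eq (R := R) (ℛ R a)))
  simp only [map_sum, lTensor_tmul, toSpanSingleton_apply, one_smul, tmul_smul] at h
  simpa [leftCoaction_tmul (ℛ R a), tmul_smul] using h

lemma counitLeft_comp_lTensor_mulRight (b : A) :
    counitLeft R A ∘ₗ (mulRight R b).lTensor A = mulRight R b ∘ₗ counitLeft R A := by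
  ext a c
  simp

lemma counitLeft_comp_shearMapOf (f : A →ₗ[R] A) :
    counitLeft R A ∘ₗ shearMapOf f = mul' R A ∘ₗ f.rTensor A := by
  refine TensorProduct.ext' fun a b => ?_
  rw [comp_apply, shearMapOf_tmul f (ℛ R a), map_sum]
  simp only [counitLeft_tmul, ← smul_mul_assoc, ← Finset.sum_mul, ← map_smul]
  rw [← map_sum, sum_counit_smul]
  rfl

lemma ofShearMap_shearMapOf (f : A →ₗ[R] A) : ofShearMap (shearMapOf f) = f := by
  ext a
  simp [ofShearMap, ← comp_assoc, counitLeft_comp_shearMapOf]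

lemma shearMapOf_injective : Function.Injective (shearMapOf (R := R) (A := A)) :=
  Function.LeftInverse.injective ofShearMap_shearMapOf

lemma shearMapOf_comp_includeLeft (f : A →ₗ[R] A) :
    shearMapOf f ∘ₗ (Algebra.TensorProduct.includeLeft (S := R)).toLinearMap =
      f.lTensor A ∘ₗ comul := by
  ext a
  simp [shearMapOf_tmul _ (ℛ R a), ← (ℛ R a).eq]

lemma isRightLinearLeftColinear_shearMapOf (f : A →ₗ[R] A) :
    IsRightLinearLeftColinear (shearMapOf f) where
  commute_lTensor_mulRight b := by
    rw [commute_iff_eq]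
    ext a c
    simp [shearMapOf_tmul _ (ℛ R a), mul_assoc]
  leftCoaction_comp := by
    refine TensorProduct.ext' fun a c => ?_
    have h_coassoc := sum_map_tmul_tmul_eq (R := R) LinearMap.id LinearMap.id (mulRight R c ∘ₗ f) a
      (repr := ℛ R a) (a₁ := fun i => ℛ R ((ℛ R a).left i))
      (a₂ := fun i => ℛ R ((ℛ R a).right i))
    simp only [id_apply, comp_apply, mulRight_apply] at h_coassoc
    simp only [comp_apply, shearMapOf_tmul _ (ℛ R a), leftCoaction_tmul (ℛ R a), map_sum,
      leftCoaction_tmul (ℛ R _), lTensor_tmul, shearMapOf_tmul _ (ℛ R _), tmul_sum]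
    exact h_coassoc.symm

namespace IsRightLinearLeftColinear

lemma one : IsRightLinearLeftColinear (1 : Module.End R (A ⊗[R] A)) where
  commute_lTensor_mulRight b := Commute.one_left _
  leftCoaction_comp := by rw [Module.End.one_eq_id, lTensor_id, comp_id, id_comp]

lemma mul {G H : Module.End R (A ⊗[R] A)} (hG : IsRightLinearLeftColinear G)
    (hH : IsRightLinearLeftColinear H) : IsRightLinearLeftColinear (G * H) where
  commute_lTensor_mulRight b :=
    (hG.commute_lTensor_mulRight b).mul_left (hH.commute_lTensor_mulRight b)
  leftCoaction_comp := by
    rw [Module.End.mul_eq_comp, ← comp_assoc, hG.leftCoaction_comp, comp_assoc,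
      hH.leftCoaction_comp, ← comp_assoc, ← lTensor_comp]

lemma units_inv {u : (Module.End R (A ⊗[R] A))ˣ} (hu : IsRightLinearLeftColinear u.val) :
    IsRightLinearLeftColinear u⁻¹.val where
  commute_lTensor_mulRight b := (hu.commute_lTensor_mulRight b).units_inv_left
  leftCoaction_comp := by
    have h_inv_mul : u⁻¹.val.lTensor A ∘ₗ u.val.lTensor A = LinearMap.id := by
      rw [← lTensor_comp, ← Module.End.mul_eq_comp, u.inv_mul, Module.End.one_eq_id, lTensor_id]
    calc leftCoaction R A ∘ₗ u⁻¹.val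
        = u⁻¹.val.lTensor A ∘ₗ (u.val.lTensor A ∘ₗ leftCoaction R A) ∘ₗ u⁻¹.val := by
          rw [← comp_assoc, ← comp_assoc, h_inv_mul, id_comp]
      _ = u⁻¹.val.lTensor A ∘ₗ leftCoaction R A := by
          rw [← hu.leftCoaction_comp, comp_assoc, ← Module.End.mul_eq_comp, u.mul_inv,
            Module.End.one_eq_id, comp_id]

lemma shearMapOf_ofShearMap {G : Module.End R (A ⊗[R] A)} (hG : IsRightLinearLeftColinear G) :
    shearMapOf (ofShearMap G) = G := by
  have h_counitLeft : counitLeft R A ∘ₗ G = mul' R A ∘ₗ (ofShearMap G).rTensor A := by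
    refine TensorProduct.ext' fun a b => ?_
    have hab : a ⊗ₜ[R] b = (mulRight R b).lTensor A (a ⊗ₜ 1) := by simp
    rw [comp_apply, hab, ← Module.End.mul_apply, (hG.commute_lTensor_mulRight b).eq,
      Module.End.mul_apply, ← comp_apply (counitLeft R A), counitLeft_comp_lTensor_mulRight]
    simp [ofShearMap]
  calc shearMapOf (ofShearMap G)
      = (counitLeft R A ∘ₗ G).lTensor A ∘ₗ leftCoaction R A := by rw [h_counitLeft]; rfl
    _ = (counitLeft R A).lTensor A ∘ₗ leftCoaction R A ∘ₗ G := by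
        rw [lTensor_comp, comp_assoc, hG.leftCoaction_comp]
    _ = G := by rw [← comp_assoc, lTensor_counitLeft_comp_leftCoaction, id_comp]

end IsRightLinearLeftColinear

lemma shearMapOf_mul (f g : WithConv (A →ₗ[R] A)) :
    shearMapOf (f * g).ofConv = shearMapOf f.ofConv * shearMapOf g.ofConv := by
  rw [← ((isRightLinearLeftColinear_shearMapOf _).mul
    (isRightLinearLeftColinear_shearMapOf _)).shearMapOf_ofShearMap, ofShearMap,
    Module.End.mul_eq_comp, comp_assoc, shearMapOf_comp_includeLeft, ← comp_assoc,
    counitLeft_comp_shearMapOf, LinearMap.convMul_def, ← rTensor_comp_lTensor]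
  rfl

lemma shearMapOf_one : shearMapOf (1 : WithConv (A →ₗ[R] A)).ofConv = 1 := by
  rw [← IsRightLinearLeftColinear.one.shearMapOf_ofShearMap]
  congr 1
  ext a
  simp [ofShearMap, LinearMap.convOne_def, Algebra.algebraMap_eq_smul_one]

noncomputable def shearMapHom : WithConv (A →ₗ[R] A) →* Module.End R (A ⊗[R] A) where
  toFun f := shearMapOf f.ofConv
  map_one' := shearMapOf_one
  map_mul' := shearMapOf_mul

lemma isUnit_shearMapOf_iff (f : A →ₗ[R] A) : IsUnit (shearMapOf f) ↔ IsUnit (toConv f) := by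
  refine ⟨fun ⟨u, hu⟩ => ?_, fun hf => hf.map shearMapHom⟩
  have hu_inv := (hu ▸ isRightLinearLeftColinear_shearMapOf f).units_inv.shearMapOf_ofShearMap
  refine isUnit_iff_exists.mpr ⟨toConv (ofShearMap ↑u⁻¹),
    ofConv_injective (shearMapOf_injective ?_), ofConv_injective (shearMapOf_injective ?_)⟩ <;>
  simp [shearMapOf_mul, shearMapOf_one, hu_inv, ← hu]

lemma isUnit_toConv_id_iff :
    IsUnit (toConv (LinearMap.id : A →ₗ[R] A)) ↔ ∃ S : A →ₗ[R] A,
      mul' R A ∘ₗ S.rTensor A ∘ₗ comul = Algebra.linearMap R A ∘ₗ counit ∧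
      mul' R A ∘ₗ S.lTensor A ∘ₗ comul = Algebra.linearMap R A ∘ₗ counit := by
  refine isUnit_iff_exists.trans (toConv_surjective.exists.trans (exists_congr fun S => ?_))
  rw [and_comm]
  exact and_congr toConv_injective.eq_iff toConv_injective.eq_iff

end ShearMapOf

lemma shearMap_eq_shearMapOf_id : shearMap R A = shearMapOf LinearMap.id := by
  rw [shearMap, shearMapOf, leftCoaction, rTensor_id, comp_id]

/-- A bialgebra `A` over a commutative ring `R` admits an antipode (equivalently, can be
equipped with the structure of a Hopf algebra over `R`) if and only if its shear map
`a ⊗ b ↦ Σ a₍₁₎ ⊗ a₍₂₎·b` is bijective. -/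
theorem exists_antipode_iff_bijective_shearMap :
    (∃ S : A →ₗ[R] A,
        LinearMap.mul' R A ∘ₗ S.rTensor A ∘ₗ Coalgebra.comul =
          Algebra.linearMap R A ∘ₗ Coalgebra.counit ∧
        LinearMap.mul' R A ∘ₗ S.lTensor A ∘ₗ Coalgebra.comul =
          Algebra.linearMap R A ∘ₗ Coalgebra.counit) ↔
      Function.Bijective (shearMap R A) := by
  rw [← isUnit_toConv_id_iff, ← isUnit_shearMapOf_iff, ← shearMap_eq_shearMapOf_id,
    Module.End.isUnit_iff]
end

section
/- Let R be a commutative ring and A a bialgebra over R whose shear map sh_A is bijective, with inverse σ : A ⊗[R] A → A ⊗[R] A. Then the R-linear map S : A → A defined by S(a) := (ε ⊗ id_A)(σ(a ⊗ 1)) (where ε ⊗ id_A : A ⊗[R] A → R ⊗[R] A ≅ A) is an antipode for A, so A is a Hopf algebra over R. -/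
open TensorProduct

variable (R A : Type*) [CommRing R] [Ring A] [Bialgebra R A]

/-- The candidate antipode `S(a) := (ε ⊗ id_A)(σ(a ⊗ 1))` built from an inverse `σ` of the
shear map, where `ε ⊗ id_A : A ⊗[R] A → R ⊗[R] A ≅ A`. -/
noncomputable def antipodeOfShearMapInv (σ : A ⊗[R] A →ₗ[R] A ⊗[R] A) : A →ₗ[R] A :=
  (TensorProduct.lid R A).toLinearMap ∘ₗ
    (Coalgebra.counit (R := R) (A := A)).rTensor A ∘ₗ σ ∘ₗ (TensorProduct.mk R A A).flip 1


/-! The shear map is right `A`-linear in its second factor and `(ε ⊗ id) ∘ sh_A = μ`, so its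
inverse `σ` is right `A`-linear as well and `μ ∘ σ = ε ⊗ id`. Right linearity gives
`Σ S(a₍₁₎)·a₍₂₎ = (ε ⊗ id)(σ(Δa)) = ε(a)·1`. By coassociativity, `Δ ⊗ id` intertwines `sh_A`
with `id ⊗ sh_A`, hence `σ` with `id ⊗ σ`; applying `id ⊗ ε ⊗ id` yields
`(id ⊗ S)(Δa) = σ(a ⊗ 1)`, whence `Σ a₍₁₎·S(a₍₂₎) = μ(σ(a ⊗ 1)) = ε(a)·1`. -/

open Coalgebra

noncomputable def counitSMul : A ⊗[R] A →ₗ[R] A :=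
  (TensorProduct.lid R A).toLinearMap ∘ₗ (counit (R := R) (A := A)).rTensor A

noncomputable def comulLeft : A ⊗[R] A →ₗ[R] A ⊗[R] (A ⊗[R] A) :=
  (TensorProduct.assoc R A A A).toLinearMap ∘ₗ (comul (R := R) (A := A)).rTensor A

variable {R A}

@[simp]
lemma counitSMul_tmul (a b : A) : counitSMul R A (a ⊗ₜ b) = counit (R := R) a • b := rfl

lemma counitSMul_comul (a : A) : counitSMul R A (comul a) = a := by
  simp [counitSMul]

lemma counitSMul_lTensor_mulRight (b : A) (x : A ⊗[R] A) :
    counitSMul R A ((LinearMap.mulRight R b).lTensor A x) = counitSMul R A x * b := by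
  induction x using TensorProduct.induction_on <;> simp_all [add_mul]

lemma comulLeft_tmul (a b : A) :
    comulLeft R A (a ⊗ₜ b) = ((TensorProduct.mk R A A).flip b).lTensor A (comul a) := by
  rw [comulLeft, LinearMap.comp_apply, LinearMap.rTensor_tmul]
  induction comul (R := R) a using TensorProduct.induction_on <;> simp_all [add_tmul]

lemma lTensor_counitSMul_comulLeft (x : A ⊗[R] A) :
    (counitSMul R A).lTensor A (comulLeft R A x) = x := by
  induction x using TensorProduct.induction_on with
  | zero => simp
  | add x y hx hy => simp [hx, hy]
  | tmul a b =>
    have hb : counitSMul R A ∘ₗ (TensorProduct.mk R A A).flip b =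
        LinearMap.toSpanSingleton R A b ∘ₗ counit := by
      ext; simp
    rw [comulLeft_tmul, ← LinearMap.lTensor_comp_apply, hb, LinearMap.lTensor_comp_apply,
      lTensor_counit_comul]
    simp

lemma shearMap_tmul (a b : A) :
    shearMap R A (a ⊗ₜ b) = (LinearMap.mulRight R b).lTensor A (comul a) := by
  rw [shearMap, LinearMap.comp_apply, LinearMap.comp_apply, LinearMap.rTensor_tmul]
  induction comul (R := R) a using TensorProduct.induction_on <;> simp_all [add_tmul]

lemma shearMap_tmul_one (a : A) : shearMap R A (a ⊗ₜ 1) = comul a := by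
  simp [shearMap_tmul]

lemma shearMap_lTensor_mulRight (b : A) (x : A ⊗[R] A) :
    shearMap R A ((LinearMap.mulRight R b).lTensor A x) =
      (LinearMap.mulRight R b).lTensor A (shearMap R A x) := by
  induction x using TensorProduct.induction_on with
  | zero => simp
  | add x y hx hy => simp [hx, hy]
  | tmul a c =>
    rw [LinearMap.lTensor_tmul, LinearMap.mulRight_apply, shearMap_tmul, shearMap_tmul,
      LinearMap.mulRight_mul, LinearMap.lTensor_comp_apply]

lemma counitSMul_shearMap (x : A ⊗[R] A) :
    counitSMul R A (shearMap R A x) = LinearMap.mul' R A x := by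
  induction x using TensorProduct.induction_on with
  | zero => simp
  | add x y hx hy => simp [hx, hy]
  | tmul a b =>
    rw [shearMap_tmul, counitSMul_lTensor_mulRight, counitSMul_comul, LinearMap.mul'_apply]

lemma comulLeft_lTensor (f : A →ₗ[R] A) (x : A ⊗[R] A) :
    comulLeft R A (f.lTensor A x) = (f.lTensor A).lTensor A (comulLeft R A x) := by
  induction x using TensorProduct.induction_on with
  | zero => simp
  | add x y hx hy => simp [hx, hy]
  | tmul a b =>
    rw [LinearMap.lTensor_tmul, comulLeft_tmul, comulLeft_tmul, ← LinearMap.lTensor_comp_apply]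
    rfl

lemma comulLeft_comul (a : A) : comulLeft R A (comul a) = (comul (R := R)).lTensor A (comul a) :=
  coassoc_apply a

lemma comulLeft_shearMap (x : A ⊗[R] A) :
    comulLeft R A (shearMap R A x) = (shearMap R A).lTensor A (comulLeft R A x) := by
  induction x using TensorProduct.induction_on with
  | zero => simp
  | add x y hx hy => simp [hx, hy]
  | tmul a b =>
    have hsh : shearMap R A ∘ₗ (TensorProduct.mk R A A).flip b =
        (LinearMap.mulRight R b).lTensor A ∘ₗ comul := by
      ext; simp [shearMap_tmul]
    rw [shearMap_tmul, comulLeft_lTensor, comulLeft_comul, comulLeft_tmul,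
      ← LinearMap.lTensor_comp_apply, ← LinearMap.lTensor_comp_apply, hsh]

section ShearMapInverse

variable {σ : A ⊗[R] A →ₗ[R] A ⊗[R] A}

lemma antipodeOfShearMapInv_eq :
    antipodeOfShearMapInv R A σ = counitSMul R A ∘ₗ σ ∘ₗ (TensorProduct.mk R A A).flip 1 :=
  rfl

lemma antipodeOfShearMapInv_apply (a : A) :
    antipodeOfShearMapInv R A σ a = counitSMul R A (σ (a ⊗ₜ 1)) :=
  rfl

lemma mul'_shearMapInv (hσ₂ : shearMap R A ∘ₗ σ = LinearMap.id) (x : A ⊗[R] A) :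
    LinearMap.mul' R A (σ x) = counitSMul R A x := by
  rw [← counitSMul_shearMap, ← LinearMap.comp_apply (shearMap R A), hσ₂, LinearMap.id_apply]

lemma shearMapInv_comul (hσ₁ : σ ∘ₗ shearMap R A = LinearMap.id) (a : A) :
    σ (comul a) = a ⊗ₜ 1 := by
  rw [← shearMap_tmul_one, ← LinearMap.comp_apply σ, hσ₁, LinearMap.id_apply]

lemma shearMapInv_lTensor_mulRight (hσ₁ : σ ∘ₗ shearMap R A = LinearMap.id)
    (hσ₂ : shearMap R A ∘ₗ σ = LinearMap.id) (b : A) (x : A ⊗[R] A) :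
    σ ((LinearMap.mulRight R b).lTensor A x) = (LinearMap.mulRight R b).lTensor A (σ x) := by
  conv_lhs => rw [← LinearMap.id_apply (R := R) x, ← hσ₂, LinearMap.comp_apply,
    ← shearMap_lTensor_mulRight, ← LinearMap.comp_apply σ, hσ₁, LinearMap.id_apply]

lemma comulLeft_shearMapInv (hσ₁ : σ ∘ₗ shearMap R A = LinearMap.id)
    (hσ₂ : shearMap R A ∘ₗ σ = LinearMap.id) (x : A ⊗[R] A) :
    comulLeft R A (σ x) = σ.lTensor A (comulLeft R A x) := by
  conv_rhs => rw [← LinearMap.id_apply (R := R) x, ← hσ₂, LinearMap.comp_apply,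
    comulLeft_shearMap, ← LinearMap.lTensor_comp_apply, hσ₁, LinearMap.lTensor_id,
    LinearMap.id_apply]

lemma mul'_rTensor_antipodeOfShearMapInv (hσ₁ : σ ∘ₗ shearMap R A = LinearMap.id)
    (hσ₂ : shearMap R A ∘ₗ σ = LinearMap.id) (x : A ⊗[R] A) :
    LinearMap.mul' R A ((antipodeOfShearMapInv R A σ).rTensor A x) = counitSMul R A (σ x) := by
  induction x using TensorProduct.induction_on with
  | zero => simp
  | add x y hx hy => simp [hx, hy]
  | tmul a b =>
    have hab : a ⊗ₜ[R] b = (LinearMap.mulRight R b).lTensor A (a ⊗ₜ 1) := by simp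
    rw [LinearMap.rTensor_tmul, LinearMap.mul'_apply, hab, shearMapInv_lTensor_mulRight hσ₁ hσ₂,
      counitSMul_lTensor_mulRight, antipodeOfShearMapInv_apply]

lemma lTensor_antipodeOfShearMapInv_comul (hσ₁ : σ ∘ₗ shearMap R A = LinearMap.id)
    (hσ₂ : shearMap R A ∘ₗ σ = LinearMap.id) (a : A) :
    (antipodeOfShearMapInv R A σ).lTensor A (comul a) = σ (a ⊗ₜ 1) := by
  calc (antipodeOfShearMapInv R A σ).lTensor A (comul a)
      _ = (counitSMul R A).lTensor A (σ.lTensor A (comulLeft R A (a ⊗ₜ 1))) := by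
        rw [antipodeOfShearMapInv_eq, comulLeft_tmul, LinearMap.lTensor_comp_apply,
          LinearMap.lTensor_comp_apply]
      _ = (counitSMul R A).lTensor A (comulLeft R A (σ (a ⊗ₜ 1))) := by
        rw [comulLeft_shearMapInv hσ₁ hσ₂]
      _ = σ (a ⊗ₜ 1) := lTensor_counitSMul_comulLeft _

end ShearMapInverse

/-- If the shear map of a bialgebra `A` over a commutative ring `R` is bijective with inverse
`σ`, then `S(a) := (ε ⊗ id_A)(σ(a ⊗ 1))` is an antipode for `A`, so `A` is a Hopf algebra
over `R`. -/
theorem antipodeOfShearMapInv_is_antipode (σ : A ⊗[R] A →ₗ[R] A ⊗[R] A)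
    (hσ₁ : σ ∘ₗ shearMap R A = LinearMap.id) (hσ₂ : shearMap R A ∘ₗ σ = LinearMap.id) :
    (LinearMap.mul' R A ∘ₗ (antipodeOfShearMapInv R A σ).rTensor A ∘ₗ Coalgebra.comul =
        Algebra.linearMap R A ∘ₗ Coalgebra.counit ∧
      LinearMap.mul' R A ∘ₗ (antipodeOfShearMapInv R A σ).lTensor A ∘ₗ Coalgebra.comul =
        Algebra.linearMap R A ∘ₗ Coalgebra.counit) ∧
    Nonempty (HopfAlgebra R A) := by
  have left : LinearMap.mul' R A ∘ₗ (antipodeOfShearMapInv R A σ).rTensor A ∘ₗ comul =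
      Algebra.linearMap R A ∘ₗ counit := by
    ext a
    simp [mul'_rTensor_antipodeOfShearMapInv hσ₁ hσ₂, shearMapInv_comul hσ₁,
      Algebra.algebraMap_eq_smul_one]
  have right : LinearMap.mul' R A ∘ₗ (antipodeOfShearMapInv R A σ).lTensor A ∘ₗ comul =
      Algebra.linearMap R A ∘ₗ counit := by
    ext a
    simp [lTensor_antipodeOfShearMapInv_comul hσ₁ hσ₂, mul'_shearMapInv hσ₂,
      Algebra.algebraMap_eq_smul_one]
  exact ⟨⟨left, right⟩, ⟨{ antipode := antipodeOfShearMapInv R A σ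
                           mul_antipode_rTensor_comul := left
                           mul_antipode_lTensor_comul := right }⟩⟩
end

section
/- Let R be a commutative ring and A a bialgebra over R. Then the shear map of A, the R-linear endomorphism of A ⊗[R] A determined by a ⊗ b ↦ Σ a₍₁₎ ⊗ a₍₂₎·b, is bijective if and only if the reversed shear map, the R-linear endomorphism determined by a ⊗ b ↦ Σ a·b₍₁₎ ⊗ b₍₂₎, is bijective. -/
open TensorProduct

variable (R A : Type*) [CommRing R] [Ring A] [Bialgebra R A]

/-- The reversed shear map of a bialgebra `A` over `R`: the `R`-linear endomorphism of
`A ⊗[R] A` determined by `a ⊗ b ↦ Σ a·b₍₁₎ ⊗ b₍₂₎`. -/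
noncomputable def shearMap' : A ⊗[R] A →ₗ[R] A ⊗[R] A :=
  (LinearMap.mul' R A).rTensor A ∘ₗ (TensorProduct.assoc R A A A).symm.toLinearMap ∘ₗ
    (Coalgebra.comul (R := R) (A := A)).lTensor A

/-! For a coalgebra `C`, an algebra `A` and `f : C → A`, the twisted shear
`shearBy f : c ⊗ a ↦ Σ c₍₁₎ ⊗ f(c₍₂₎)·a` is an injective monoid homomorphism from the
convolution algebra to `End (C ⊗ A)`, so it sends convolution units to automorphisms.
Conversely, if `shearBy f` has an inverse `γ`, then `γ` is again colinear for the left coaction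
`Δ ⊗ id`, which forces `γ (c ⊗ 1) = Σ c₍₁₎ ⊗ S(c₍₂₎)` with `S c = (ε ⊗ id) (γ (c ⊗ 1))`;
applying `ε ⊗ id` shows `f * S = 1`, and injectivity upgrades this to `S * f = 1`.
The mirror image `shearBy' f : a ⊗ c ↦ Σ a·f(c₍₁₎) ⊗ c₍₂₎` is an anti-homomorphism with the same
property. Both shear maps of `A` are the case `f = id`, so each is bijective exactly when `id` is
invertible in the convolution algebra, i.e. when `A` admits an antipode.
-/

open Coalgebra WithConv

lemma IsUnit.of_map_of_mul_eq_one {M N : Type*} [Monoid M] [Monoid N] (φ : M →* N)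
    (hφ : Function.Injective φ) {x y : M} (hx : IsUnit (φ x)) (hxy : x * y = 1) : IsUnit x := by
  have hyx : φ (y * x) = φ 1 := by
    simpa using hx.isRegular.left.mul_eq_one_symm (map_mul_eq_one φ hxy)
  exact isUnit_iff_exists.mpr ⟨y, hxy, hφ hyx⟩

lemma IsUnit.of_map_of_mul_eq_one_right {M N : Type*} [Monoid M] [Monoid N] (φ : M →* N)
    (hφ : Function.Injective φ) {x y : M} (hx : IsUnit (φ x)) (hyx : y * x = 1) : IsUnit x := by
  have hxy : φ (x * y) = φ 1 := by
    simpa using hx.isRegular.right.mul_eq_one_symm (map_mul_eq_one φ hyx)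
  exact isUnit_iff_exists.mpr ⟨y, hφ hxy, hyx⟩

lemma Coalgebra.sum_counit_right_smul {R C ι : Type*} [CommSemiring R] [AddCommMonoid C]
    [Module R C] [Coalgebra R C] {c : C} (𝓡 : Repr R c ι) :
    ∑ i ∈ 𝓡.index, counit (R := R) (𝓡.right i) • 𝓡.left i = c := by
  simpa only [map_sum, _root_.TensorProduct.rid_tmul, one_smul] using
    congr(_root_.TensorProduct.rid R C $(sum_tmul_counit_eq (R := R) 𝓡))

section

variable {R C A : Type*} [CommSemiring R] [AddCommMonoid C] [Module R C] [Coalgebra R C]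
  [Semiring A] [Algebra R A]

noncomputable def shearBy (f : C →ₗ[R] A) : Module.End R (C ⊗[R] A) :=
  (LinearMap.mul' R A).lTensor C ∘ₗ (TensorProduct.assoc R C A A).toLinearMap ∘ₗ
    (f.lTensor C ∘ₗ comul).rTensor A

lemma Coalgebra.Repr.shearBy_tmul {ι : Type*} {c : C} (𝓡 : Repr R c ι) (f : C →ₗ[R] A)
    (a : A) : shearBy f (c ⊗ₜ a) = ∑ i ∈ 𝓡.index, 𝓡.left i ⊗ₜ (f (𝓡.right i) * a) := by
  simp [shearBy, ← 𝓡.eq, sum_tmul]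

lemma shearBy_mul (f g : WithConv (C →ₗ[R] A)) :
    shearBy (f * g).ofConv = shearBy f.ofConv * shearBy g.ofConv := by
  ext c a
  let 𝓡 := ℛ R c
  have := congr(
    (LinearMap.mul' R A ∘ₗ map f.ofConv (LinearMap.mulRight R a ∘ₗ g.ofConv)).lTensor C
      $(sum_tmul_tmul_eq 𝓡 (fun i ↦ ℛ R (𝓡.left i)) (fun i ↦ ℛ R (𝓡.right i))))
  simp only [map_sum, LinearMap.lTensor_tmul, LinearMap.comp_apply, map_tmul,
    LinearMap.mul'_apply, LinearMap.mulRight_apply] at this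
  simp [𝓡.shearBy_tmul, (ℛ R _).shearBy_tmul, (ℛ R _).convMul_apply, Finset.sum_mul, tmul_sum,
    mul_assoc, this]

lemma shearBy_one : shearBy (1 : WithConv (C →ₗ[R] A)).ofConv = 1 := by
  ext c a
  simp [shearBy, LinearMap.convOne_def, LinearMap.lTensor_comp]

noncomputable def shearByHom : WithConv (C →ₗ[R] A) →* Module.End R (C ⊗[R] A) where
  toFun f := shearBy f.ofConv
  map_one' := shearBy_one
  map_mul' := shearBy_mul

@[simp] lemma shearByHom_apply (f : WithConv (C →ₗ[R] A)) :
    shearByHom f = shearBy f.ofConv := rfl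

lemma lid_rTensor_counit_shearBy (f : C →ₗ[R] A) (x : C ⊗[R] A) :
    TensorProduct.lid R A (counit.rTensor A (shearBy f x)) =
      LinearMap.mul' R A (f.rTensor A x) := by
  induction x using TensorProduct.induction_on with
  | zero => simp
  | add x y hx hy => simp only [map_add, hx, hy]
  | tmul c a =>
    rw [(ℛ R c).shearBy_tmul, map_sum, map_sum]
    simp only [LinearMap.rTensor_tmul, TensorProduct.lid_tmul, ← smul_mul_assoc, ← Finset.sum_mul,
      ← map_smul f, ← map_sum f, sum_counit_smul, LinearMap.mul'_apply]

lemma shearByHom_injective : Function.Injective (shearByHom (R := R) (C := C) (A := A)) := by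
  intro f g hfg
  ext c
  have := congr(TensorProduct.lid R A (counit.rTensor A ($hfg (c ⊗ₜ (1 : A)))))
  simpa only [shearByHom_apply, lid_rTensor_counit_shearBy, LinearMap.rTensor_tmul,
    LinearMap.mul'_apply, mul_one] using this

lemma assoc_rTensor_comul_shearBy (f : C →ₗ[R] A) (x : C ⊗[R] A) :
    TensorProduct.assoc R C C A (comul.rTensor A (shearBy f x)) =
      (shearBy f).lTensor C (TensorProduct.assoc R C C A (comul.rTensor A x)) := by
  induction x using TensorProduct.induction_on with
  | zero => simp
  | add x y hx hy => simp only [map_add, hx, hy]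
  | tmul c a =>
    let 𝓡 := ℛ R c
    have := congr(LinearMap.lTensor C (LinearMap.lTensor C (LinearMap.mulRight R a ∘ₗ f))
      $(sum_tmul_tmul_eq 𝓡 (fun i ↦ ℛ R (𝓡.left i)) (fun i ↦ ℛ R (𝓡.right i))))
    simp only [map_sum, LinearMap.lTensor_tmul, LinearMap.comp_apply,
      LinearMap.mulRight_apply] at this
    rw [𝓡.shearBy_tmul, LinearMap.rTensor_tmul, ← 𝓡.eq, sum_tmul]
    simp only [map_sum, LinearMap.rTensor_tmul, ← (ℛ R _).eq, sum_tmul, LinearMap.lTensor_tmul,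
      (ℛ R _).shearBy_tmul, TensorProduct.assoc_tmul, tmul_sum]
    exact this

lemma lTensor_lid_rTensor_counit_assoc_rTensor_comul {M : Type*} [AddCommMonoid M] [Module R M]
    (x : C ⊗[R] M) :
    ((TensorProduct.lid R M).toLinearMap ∘ₗ counit.rTensor M).lTensor C
      (TensorProduct.assoc R C C M (comul.rTensor M x)) = x := by
  induction x using TensorProduct.induction_on with
  | zero => simp
  | add x y hx hy => simp only [map_add, hx, hy]
  | tmul c m =>
    conv_rhs => rw [← sum_counit_right_smul (ℛ R c), sum_tmul]
    simp [← (ℛ R c).eq, sum_tmul, smul_tmul]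

lemma isUnit_toConv_of_bijective_shearBy {f : C →ₗ[R] A}
    (h : Function.Bijective (shearBy f)) : IsUnit (toConv f) := by
  let γ := (LinearEquiv.ofBijective (shearBy f) h).symm
  let Q : C ⊗[R] A →ₗ[R] A := (TensorProduct.lid R A).toLinearMap ∘ₗ counit.rTensor A
  let S : C →ₗ[R] A := Q ∘ₗ γ.toLinearMap ∘ₗ (TensorProduct.mk R C A).flip 1
  have hγ_colinear (x : C ⊗[R] A) : TensorProduct.assoc R C C A (comul.rTensor A (γ x)) =
      γ.toLinearMap.lTensor C (TensorProduct.assoc R C C A (comul.rTensor A x)) := by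
    have hx : shearBy f (γ x) = x := LinearEquiv.apply_ofBijective_symm_apply _ x
    have hγ_left : γ.toLinearMap ∘ₗ shearBy f = LinearMap.id :=
      LinearMap.ext (LinearEquiv.ofBijective_symm_apply_apply (h := h))
    rw [← hx, assoc_rTensor_comul_shearBy, hx,
      ← LinearMap.comp_apply (γ.toLinearMap.lTensor C), ← LinearMap.lTensor_comp, hγ_left,
      LinearMap.lTensor_id, LinearMap.id_apply]
  have hγ (c : C) : γ (c ⊗ₜ 1) = S.lTensor C (comul c) := by
    rw [← lTensor_lid_rTensor_counit_assoc_rTensor_comul (γ (c ⊗ₜ 1)), hγ_colinear,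
      LinearMap.rTensor_tmul, ← (ℛ R c).eq]
    simp only [sum_tmul, map_sum, TensorProduct.assoc_tmul, LinearMap.lTensor_tmul]
    rfl
  have hfS : toConv f * toConv S = 1 := by
    ext c
    calc (toConv f * toConv S) c = LinearMap.mul' R A (f.rTensor A (S.lTensor C (comul c))) := by
          rw [LinearMap.convMul_apply, ← LinearMap.comp_apply (f.rTensor A),
            LinearMap.rTensor_comp_lTensor]
      _ = Q (shearBy f (γ (c ⊗ₜ 1))) := by
          rw [← hγ]; exact (lid_rTensor_counit_shearBy f _).symm
      _ = (1 : WithConv (C →ₗ[R] A)) c := by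
          rw [LinearEquiv.apply_ofBijective_symm_apply]
          simp [Q, Algebra.algebraMap_eq_smul_one]
  exact .of_map_of_mul_eq_one shearByHom shearByHom_injective
    ((Module.End.isUnit_iff _).mpr h) hfS

lemma bijective_shearBy_iff (f : C →ₗ[R] A) :
    Function.Bijective (shearBy f) ↔ IsUnit (toConv f) :=
  ⟨isUnit_toConv_of_bijective_shearBy,
    fun h ↦ (Module.End.isUnit_iff _).mp (h.map shearByHom)⟩

noncomputable def shearBy' (f : C →ₗ[R] A) : Module.End R (A ⊗[R] C) :=
  (LinearMap.mul' R A).rTensor C ∘ₗ (TensorProduct.assoc R A A C).symm.toLinearMap ∘ₗ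
    (f.rTensor C ∘ₗ comul).lTensor A

lemma Coalgebra.Repr.shearBy'_tmul {ι : Type*} {c : C} (𝓡 : Repr R c ι) (f : C →ₗ[R] A)
    (a : A) : shearBy' f (a ⊗ₜ c) = ∑ i ∈ 𝓡.index, (a * f (𝓡.left i)) ⊗ₜ 𝓡.right i := by
  simp [shearBy', ← 𝓡.eq, tmul_sum]

lemma shearBy'_mul (f g : WithConv (C →ₗ[R] A)) :
    shearBy' (f * g).ofConv = shearBy' g.ofConv * shearBy' f.ofConv := by
  ext a c
  let 𝓡 := ℛ R c
  have := congr(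
    (LinearMap.mulLeft R a ∘ₗ LinearMap.mul' R A ∘ₗ map f.ofConv g.ofConv).rTensor C
      ((TensorProduct.assoc R C C C).symm
      $(sum_tmul_tmul_eq 𝓡 (fun i ↦ ℛ R (𝓡.left i)) (fun i ↦ ℛ R (𝓡.right i)))))
  simp only [map_sum, TensorProduct.assoc_symm_tmul, LinearMap.rTensor_tmul,
    LinearMap.comp_apply, map_tmul, LinearMap.mul'_apply, LinearMap.mulLeft_apply] at this
  simp [𝓡.shearBy'_tmul, (ℛ R _).shearBy'_tmul, (ℛ R _).convMul_apply, Finset.mul_sum, sum_tmul,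
    mul_assoc, this]

lemma shearBy'_one : shearBy' (1 : WithConv (C →ₗ[R] A)).ofConv = 1 := by
  ext a c
  simp [shearBy', LinearMap.convOne_def, LinearMap.rTensor_comp]

noncomputable def shearByHom' : WithConv (C →ₗ[R] A) →* (Module.End R (A ⊗[R] C))ᵐᵒᵖ where
  toFun f := .op (shearBy' f.ofConv)
  map_one' := by rw [shearBy'_one, MulOpposite.op_one]
  map_mul' f g := by rw [shearBy'_mul, MulOpposite.op_mul]

@[simp] lemma shearByHom'_apply (f : WithConv (C →ₗ[R] A)) :
    shearByHom' f = .op (shearBy' f.ofConv) := rfl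

lemma rid_lTensor_counit_shearBy' (f : C →ₗ[R] A) (x : A ⊗[R] C) :
    TensorProduct.rid R A (counit.lTensor A (shearBy' f x)) =
      LinearMap.mul' R A (f.lTensor A x) := by
  induction x using TensorProduct.induction_on with
  | zero => simp
  | add x y hx hy => simp only [map_add, hx, hy]
  | tmul a c =>
    rw [(ℛ R c).shearBy'_tmul, map_sum, map_sum]
    simp only [LinearMap.lTensor_tmul, TensorProduct.rid_tmul, ← mul_smul_comm, ← Finset.mul_sum,
      ← map_smul f, ← map_sum f, LinearMap.mul'_apply]
    rw [sum_counit_right_smul]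

lemma shearByHom'_injective : Function.Injective (shearByHom' (R := R) (C := C) (A := A)) := by
  intro f g hfg
  ext c
  have := congr(TensorProduct.rid R A (counit.lTensor A (($hfg).unop ((1 : A) ⊗ₜ c))))
  simpa only [shearByHom'_apply, MulOpposite.unop_op, rid_lTensor_counit_shearBy',
    LinearMap.lTensor_tmul, LinearMap.mul'_apply, one_mul] using this

lemma assoc_symm_lTensor_comul_shearBy' (f : C →ₗ[R] A) (x : A ⊗[R] C) :
    (TensorProduct.assoc R A C C).symm (comul.lTensor A (shearBy' f x)) =
      (shearBy' f).rTensor C ((TensorProduct.assoc R A C C).symm (comul.lTensor A x)) := by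
  induction x using TensorProduct.induction_on with
  | zero => simp
  | add x y hx hy => simp only [map_add, hx, hy]
  | tmul a c =>
    let 𝓡 := ℛ R c
    have := congr(((LinearMap.mulLeft R a ∘ₗ f).rTensor C).rTensor C
      ((TensorProduct.assoc R C C C).symm
        $(sum_tmul_tmul_eq 𝓡 (fun i ↦ ℛ R (𝓡.left i)) (fun i ↦ ℛ R (𝓡.right i)))))
    simp only [map_sum, TensorProduct.assoc_symm_tmul, LinearMap.rTensor_tmul,
      LinearMap.comp_apply, LinearMap.mulLeft_apply] at this
    rw [𝓡.shearBy'_tmul, LinearMap.lTensor_tmul, ← 𝓡.eq, tmul_sum]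
    simp only [map_sum, LinearMap.lTensor_tmul, ← (ℛ R _).eq, tmul_sum, LinearMap.rTensor_tmul,
      (ℛ R _).shearBy'_tmul, TensorProduct.assoc_symm_tmul, sum_tmul]
    exact this.symm

lemma rTensor_rid_lTensor_counit_assoc_symm_lTensor_comul {M : Type*} [AddCommMonoid M]
    [Module R M] (x : M ⊗[R] C) :
    ((TensorProduct.rid R M).toLinearMap ∘ₗ counit.lTensor M).rTensor C
      ((TensorProduct.assoc R M C C).symm (comul.lTensor M x)) = x := by
  induction x using TensorProduct.induction_on with
  | zero => simp
  | add x y hx hy => simp only [map_add, hx, hy]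
  | tmul m c =>
    conv_rhs => rw [← sum_counit_smul (ℛ R c), tmul_sum]
    simp [← (ℛ R c).eq, tmul_sum, smul_tmul]

lemma isUnit_toConv_of_bijective_shearBy' {f : C →ₗ[R] A}
    (h : Function.Bijective (shearBy' f)) : IsUnit (toConv f) := by
  let γ := (LinearEquiv.ofBijective (shearBy' f) h).symm
  let Q : A ⊗[R] C →ₗ[R] A := (TensorProduct.rid R A).toLinearMap ∘ₗ counit.lTensor A
  let S : C →ₗ[R] A := Q ∘ₗ γ.toLinearMap ∘ₗ TensorProduct.mk R A C 1
  have hγ_colinear (x : A ⊗[R] C) :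
      (TensorProduct.assoc R A C C).symm (comul.lTensor A (γ x)) =
        γ.toLinearMap.rTensor C ((TensorProduct.assoc R A C C).symm (comul.lTensor A x)) := by
    have hx : shearBy' f (γ x) = x := LinearEquiv.apply_ofBijective_symm_apply _ x
    have hγ_left : γ.toLinearMap ∘ₗ shearBy' f = LinearMap.id :=
      LinearMap.ext (LinearEquiv.ofBijective_symm_apply_apply (h := h))
    rw [← hx, assoc_symm_lTensor_comul_shearBy', hx,
      ← LinearMap.comp_apply (γ.toLinearMap.rTensor C), ← LinearMap.rTensor_comp, hγ_left,
      LinearMap.rTensor_id, LinearMap.id_apply]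
  have hγ (c : C) : γ (1 ⊗ₜ c) = S.rTensor C (comul c) := by
    rw [← rTensor_rid_lTensor_counit_assoc_symm_lTensor_comul (γ (1 ⊗ₜ c)), hγ_colinear,
      LinearMap.lTensor_tmul, ← (ℛ R c).eq]
    simp only [tmul_sum, map_sum, TensorProduct.assoc_symm_tmul, LinearMap.rTensor_tmul]
    rfl
  have hSf : toConv S * toConv f = 1 := by
    ext c
    calc (toConv S * toConv f) c = LinearMap.mul' R A (f.lTensor A (S.rTensor C (comul c))) := by
          rw [LinearMap.convMul_apply, ← LinearMap.comp_apply (f.lTensor A),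
            LinearMap.lTensor_comp_rTensor]
      _ = Q (shearBy' f (γ (1 ⊗ₜ c))) := by
          rw [← hγ]; exact (rid_lTensor_counit_shearBy' f _).symm
      _ = (1 : WithConv (C →ₗ[R] A)) c := by
          rw [LinearEquiv.apply_ofBijective_symm_apply]
          simp [Q, Algebra.algebraMap_eq_smul_one]
  exact .of_map_of_mul_eq_one_right shearByHom' shearByHom'_injective
    (isUnit_op.mpr ((Module.End.isUnit_iff _).mpr h)) hSf

lemma bijective_shearBy'_iff (f : C →ₗ[R] A) :
    Function.Bijective (shearBy' f) ↔ IsUnit (toConv f) :=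
  ⟨isUnit_toConv_of_bijective_shearBy',
    fun h ↦ (Module.End.isUnit_iff _).mp (isUnit_op.mp (h.map shearByHom'))⟩

end

lemma shearBy_id : shearBy (LinearMap.id : A →ₗ[R] A) = shearMap R A := by
  simp [shearBy, shearMap]

lemma shearBy'_id : shearBy' (LinearMap.id : A →ₗ[R] A) = shearMap' R A := by
  simp [shearBy', shearMap']

/-- For a bialgebra `A` over a commutative ring `R`, the shear map
`a ⊗ b ↦ Σ a₍₁₎ ⊗ a₍₂₎·b` is bijective if and only if the reversed shear map
`a ⊗ b ↦ Σ a·b₍₁₎ ⊗ b₍₂₎` is bijective. -/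
theorem bijective_shearMap_iff_bijective_shearMap' :
    Function.Bijective (shearMap R A) ↔ Function.Bijective (shearMap' R A) := by
  rw [← shearBy_id, ← shearBy'_id, bijective_shearBy_iff, bijective_shearBy'_iff]
end
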